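/- arXiv:math/0701591 — 3 statements merged into one kernel-verified Lean document; each statement's English description precedes it below -/
import Mathlib

section
/- Let T be a Noetherian regular ring of prime characteristic p, let e ≥ 1, and assume T^{1/p^e} is a ∩-flat T-module. Then for every ideal A ⊆ T, the ideal Ã^(e) = ∩{L : L an ideal of T with A ⊆ L^{[p^e]}} itself satisfies A ⊆ (Ã^(e))^{[p^e]}; that is, Ã^(e) belongs to G^e(A) and is its unique minimal element. -/
open IsLocalRing

/-- The `q`-th Frobenius power of an ideal: the ideal generated by `q`-th powers of elements. -/
def Ideal.frobPow {R : Type*} [CommSemiring R] (q : ℕ) (I : Ideal R) : Ideal R :=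
  Ideal.span ((fun a => a ^ q) '' (I : Set R))

/-- Regularity for a local ring: the maximal ideal is generated by `dim R` elements. -/
def IsRegularLocal (R : Type*) [CommRing R] [IsLocalRing R] : Prop :=
  ∃ (n : ℕ) (x : Fin n → R), maximalIdeal R = Ideal.span (Set.range x) ∧
    ringKrullDim R = n

/-- A regular (commutative Noetherian) ring: every localization at a prime is regular local. -/
def IsRegularRing' (T : Type*) [CommRing T] : Prop :=
  ∀ (P : Ideal T) [P.IsPrime], IsRegularLocal (Localization.AtPrime P)

/-- `T^{1/p^e}`: the ring `T` viewed as a module over itself by restriction of scalars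
along the `e`-th iterate of the Frobenius endomorphism (`t • x = t^{p^e} * x`). -/
def FrobTwist (T : Type*) (p e : ℕ) : Type _ := T

instance FrobTwist.instAddCommGroup {T : Type*} [CommRing T] {p e : ℕ} :
    AddCommGroup (FrobTwist T p e) :=
  inferInstanceAs (AddCommGroup T)

instance FrobTwist.instModule {T : Type*} [CommRing T] {p e : ℕ} [ExpChar T p] :
    Module T (FrobTwist T p e) :=
  Module.compHom T (iterateFrobenius T p e)

/-- A `∩`-flat module: flat, and tensoring commutes with arbitrary intersections of
submodules of finitely generated modules. -/
def IsInterFlat (T : Type u) [CommRing T] (M : Type v) [AddCommGroup M] [Module T M] : Prop :=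
  Module.Flat T M ∧
    ∀ (N : Type u) [AddCommGroup N] [Module T N], Module.Finite T N →
      ∀ 𝒮 : Set (Submodule T N),
        LinearMap.range (LinearMap.lTensor M (sInf 𝒮).subtype) =
          ⨅ P ∈ 𝒮, LinearMap.range (LinearMap.lTensor M (Submodule.subtype P))

/-- `Ã^{(e)}`: the intersection of all ideals `L` with `A ⊆ L^{[q]}` (`q = p^e`). -/
def Ideal.tilde {T : Type*} [CommSemiring T] (q : ℕ) (A : Ideal T) : Ideal T :=
  sInf { L : Ideal T | A ≤ Ideal.frobPow q L }

/-! With `q = p^e`, the image of `T^{1/q} ⊗ L` in `T^{1/q} ⊗ T ≅ T^{1/q}` is `L • T^{1/q}`,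
whose underlying ideal of `T` is `L^{[q]}`. So `∩`-flatness of `T^{1/q}` says exactly that
`L ↦ L^{[q]}` commutes with arbitrary intersections, and then
`(Ã^{(e)})^{[q]} = ⋂_{L ∈ G^e(A)} L^{[q]} ⊇ A`. -/

open TensorProduct LinearMap in
lemma Submodule.range_lTensor_subtype_eq_comap_rid {R M : Type*} [CommSemiring R]
    [AddCommMonoid M] [Module R M] (I : Ideal R) :
    range (lTensor M I.subtype) =
      (I • ⊤ : Submodule R M).comap (TensorProduct.rid R M).toLinearMap := by
  rw [Submodule.comap_equiv_eq_map_symm, eq_comm, Submodule.map_symm_eq_iff, ← map_top,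
    ← Submodule.map_comp, map_top]
  refine le_antisymm ?_ fun m h ↦ Submodule.smul_induction_on h
    (fun r hr m _ ↦ ⟨m ⊗ₜ ⟨r, hr⟩, by simp⟩) (by simp +contextual [add_mem])
  rintro _ ⟨t, rfl⟩
  exact t.induction_on (by simp) (by simp +contextual [Submodule.smul_mem_smul])
    (by simp +contextual [add_mem])

lemma IsInterFlat.sInf_smul_top {R : Type u} [CommRing R] {M : Type v} [AddCommGroup M]
    [Module R M] (hM : IsInterFlat R M) (𝒮 : Set (Ideal R)) :
    sInf 𝒮 • (⊤ : Submodule R M) = ⨅ I ∈ 𝒮, I • ⊤ := by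
  have h := hM.2 R inferInstance 𝒮
  simp only [Submodule.range_lTensor_subtype_eq_comap_rid, ← Submodule.comap_iInf] at h
  exact Submodule.comap_injective_of_surjective (TensorProduct.rid R M).surjective h

lemma Ideal.coe_smul_top_eq_map {R S : Type*} [CommSemiring R] [CommSemiring S] [Module R S]
    (f : R →+* S) (hf : ∀ (r : R) (s : S), r • s = f r * s) (I : Ideal R) :
    ((I • ⊤ : Submodule R S) : Set S) = I.map f := by
  let J : Ideal S :=
    { toAddSubmonoid := (I • ⊤ : Submodule R S).toAddSubmonoid
      smul_mem' := fun s x (hx : x ∈ (I • ⊤ : Submodule R S)) ↦ by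
        change s * x ∈ (I • ⊤ : Submodule R S)
        refine Submodule.smul_induction_on hx (fun r hr t _ ↦ ?_) (fun a b ha hb ↦ ?_)
        · rw [hf, mul_left_comm, ← hf]
          exact Submodule.smul_mem_smul hr Submodule.mem_top
        · rw [mul_add]
          exact add_mem ha hb }
  refine subset_antisymm (fun x hx ↦ ?_)
    (Ideal.map_le_iff_le_comap.2 fun r hr ↦ ?_ : I.map f ≤ J)
  · refine Submodule.smul_induction_on hx (fun r hr s _ ↦ ?_) (fun _ _ ↦ add_mem)
    rw [hf]
    exact Ideal.mul_mem_right _ _ (Ideal.mem_map_of_mem f hr)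
  · change f r ∈ (I • ⊤ : Submodule R S)
    rw [← mul_one (f r), ← hf]
    exact Submodule.smul_mem_smul hr Submodule.mem_top

lemma Ideal.frobPow_eq_map_iterateFrobenius {T : Type*} [CommRing T] (p e : ℕ) [ExpChar T p]
    (I : Ideal T) : I.frobPow (p ^ e) = I.map (iterateFrobenius T p e) := rfl

lemma FrobTwist.coe_smul_top {T : Type*} [CommRing T] (p e : ℕ) [ExpChar T p] (I : Ideal T) :
    ((I • ⊤ : Submodule T (FrobTwist T p e)) : Set (FrobTwist T p e)) =
      (I.frobPow (p ^ e) : Set T) := by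
  rw [Ideal.frobPow_eq_map_iterateFrobenius]
  exact @Ideal.coe_smul_top_eq_map T T _ _ FrobTwist.instModule _ (fun _ _ ↦ rfl) I

lemma Ideal.frobPow_sInf {T : Type u} [CommRing T] {p e : ℕ} [ExpChar T p]
    (hflat : IsInterFlat T (FrobTwist T p e)) (𝒮 : Set (Ideal T)) :
    (sInf 𝒮).frobPow (p ^ e) = ⨅ I ∈ 𝒮, I.frobPow (p ^ e) := by
  have h := congrArg SetLike.coe (hflat.sInf_smul_top 𝒮)
  simp only [Submodule.coe_iInf, FrobTwist.coe_smul_top] at h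
  apply SetLike.coe_injective
  simp only [Submodule.coe_iInf]
  exact h

theorem stmt8_general {T : Type u} [CommRing T]
    (p : ℕ) [Fact p.Prime] [CharP T p]
    (e : ℕ) (hflat : IsInterFlat T (FrobTwist T p e))
    (A : Ideal T) :
    IsLeast { L : Ideal T | A ≤ Ideal.frobPow (p ^ e) L } (Ideal.tilde (p ^ e) A) := by
  refine ⟨?_, fun L hL ↦ sInf_le hL⟩
  change A ≤ (sInf _ : Ideal T).frobPow (p ^ e)
  rw [Ideal.frobPow_sInf hflat]
  exact le_iInf₂ fun L hL ↦ hL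

/-- Let `T` be a Noetherian regular ring of prime characteristic `p`, let
`e ≥ 1`, and assume `T^{1/p^e}` is a `∩`-flat `T`-module.  Then for every ideal `A ⊆ T`,
the ideal `Ã^{(e)} = ⋂ {L | A ⊆ L^{[p^e]}}` itself satisfies `A ⊆ (Ã^{(e)})^{[p^e]}`;
that is, `Ã^{(e)}` belongs to `G^e(A)` and is its unique minimal element. -/
theorem stmt8 {T : Type u} [CommRing T] [IsNoetherianRing T]
    (p : ℕ) [Fact p.Prime] [CharP T p] (hreg : IsRegularRing' T)
    (e : ℕ) (he : 1 ≤ e) (hflat : IsInterFlat T (FrobTwist T p e))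
    (A : Ideal T) :
    IsLeast { L : Ideal T | A ≤ Ideal.frobPow (p ^ e) L } (Ideal.tilde (p ^ e) A) :=
  stmt8_general p e hflat A
end

section
/- Let φ : (A, a) → (B, b) be a flat local homomorphism of complete Noetherian local rings. Then B is ∩-flat as an A-module; that is, for every finitely generated A-module N and every family {N_λ}_{λ∈Λ} of A-submodules of N, B ⊗_A (∩_λ N_λ) = ∩_λ (B ⊗_A N_λ) inside B ⊗_A N. -/
open IsLocalRing LinearMap TensorProduct

section Flat
variable {R : Type*} [CommRing R] {M : Type*} [AddCommGroup M] [Module R M]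
variable {N : Type*} [AddCommGroup N] [Module R N]

variable {R : Type*} [CommRing R] {M : Type*} [AddCommGroup M] [Module R M]
variable {N : Type*} [AddCommGroup N] [Module R N]

/-- For flat `M`, the image of `M ⊗ P` in `M ⊗ N` is the kernel of `M ⊗ N → M ⊗ N/P`. -/
lemma range_lTensor_subtype_eq_ker [Module.Flat R M] (P : Submodule R N) :
    LinearMap.range (LinearMap.lTensor M P.subtype) =
      LinearMap.ker (LinearMap.lTensor M P.mkQ) := by
  have h := Module.Flat.lTensor_exact M (LinearMap.exact_subtype_mkQ P)
  exact (LinearMap.exact_iff.mp h).symm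

lemma ker_lTensor_pi {ι : Type*} [Fintype ι] [DecidableEq ι]
    {W : ι → Type*} [∀ i, AddCommGroup (W i)] [∀ i, Module R (W i)]
    (f : ∀ i, N →ₗ[R] W i) :
    LinearMap.ker (LinearMap.lTensor M (LinearMap.pi f)) =
      ⨅ i, LinearMap.ker (LinearMap.lTensor M (f i)) := by
  have key : ∀ z : M ⊗[R] N, ∀ i,
      TensorProduct.piRightHom R R M W (LinearMap.lTensor M (LinearMap.pi f) z) i =
        LinearMap.lTensor M (f i) z := by
    intro z i
    induction z using TensorProduct.induction_on with
    | zero => simp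
    | tmul m n => simp
    | add x y hx hy => simp [map_add, hx, hy]
  ext z
  simp only [LinearMap.mem_ker, Submodule.mem_iInf]
  constructor
  · intro h i
    rw [← key z i, h]
    simp
  · intro h
    have : TensorProduct.piRightHom R R M W (LinearMap.lTensor M (LinearMap.pi f) z) = 0 := by
      funext i
      simp [key z i, h i]
    have hinj : Function.Injective (TensorProduct.piRightHom R R M W) :=
      (TensorProduct.piRight R R M W).injective
    apply hinj
    simpa using this

lemma range_lTensor_mono [Module.Flat R M] {P Q : Submodule R N} (h : P ≤ Q) :
    LinearMap.range (LinearMap.lTensor M P.subtype) ≤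
      LinearMap.range (LinearMap.lTensor M Q.subtype) := by
  have : P.subtype = Q.subtype ∘ₗ Submodule.inclusion h := rfl
  rw [this, LinearMap.lTensor_comp]
  exact LinearMap.range_comp_le_range _ _

lemma range_lTensor_sInf_finset [Module.Flat R M] (F : Finset (Submodule R N)) :
    LinearMap.range (LinearMap.lTensor M (sInf (F : Set (Submodule R N))).subtype) =
      ⨅ P ∈ F, LinearMap.range (LinearMap.lTensor M (Submodule.subtype P)) := by
  classical
  set Q : Submodule R N := sInf (F : Set (Submodule R N)) with hQ
  set g : N →ₗ[R] ∀ P : F, N ⧸ (P : Submodule R N) :=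
    LinearMap.pi (fun P : F => Submodule.mkQ (P : Submodule R N)) with hg
  have hker : LinearMap.ker g = Q := by
    rw [hg, LinearMap.ker_pi, hQ, sInf_eq_iInf']
    simp only [Submodule.ker_mkQ]
    rfl
  have hexact : Function.Exact Q.subtype g := by
    rw [LinearMap.exact_iff, hker, Submodule.range_subtype]
  have h := Module.Flat.lTensor_exact M hexact
  have h1 : LinearMap.range (LinearMap.lTensor M Q.subtype) =
      LinearMap.ker (LinearMap.lTensor M g) := (LinearMap.exact_iff.mp h).symm
  rw [h1, hg, ker_lTensor_pi]
  have hrk : ∀ P : Submodule R N, LinearMap.range (LinearMap.lTensor M P.subtype) =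
      LinearMap.ker (LinearMap.lTensor M P.mkQ) := range_lTensor_subtype_eq_ker
  simp only [hrk]
  exact iInf_subtype

end Flat

section Adic
variable {R : Type*} [CommRing R] (I : Ideal R)


lemma mem_smul_top_pi {ι : Type*} [Fintype ι] [DecidableEq ι] (J : Ideal R) (x : ι → R) :
    x ∈ (J • ⊤ : Submodule R (ι → R)) ↔ ∀ i, x i ∈ J := by
  constructor
  · intro hx i
    have : Submodule.map (LinearMap.proj i : (ι → R) →ₗ[R] R) (J • ⊤) ≤ J • ⊤ := by
      rw [Submodule.map_smul'']
      exact Submodule.smul_mono le_rfl le_top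
    have h2 : x i ∈ (J • ⊤ : Submodule R R) := this ⟨x, hx, rfl⟩
    simpa [Ideal.smul_eq_mul, Ideal.mul_top] using h2
  · intro h
    have : x = ∑ i, x i • (Pi.single i (1 : R) : ι → R) := by
      funext j
      simp [Finset.sum_apply, Pi.single_apply, Finset.sum_ite_eq']
    rw [this]
    exact Submodule.sum_mem _ fun i _ =>
      Submodule.smul_mem_smul (h i) trivial

lemma isPrecomplete_pi {ι : Type*} [Fintype ι] [DecidableEq ι] [IsPrecomplete I R] :
    IsPrecomplete I (ι → R) := by
  constructor
  intro f hf
  have hcomp : ∀ i : ι, ∃ L : R, ∀ n, f n i ≡ L [SMOD (I ^ n • ⊤ : Submodule R R)] := by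
    intro i
    apply IsPrecomplete.prec inferInstance
    intro m n hmn
    have := hf hmn
    rw [SModEq.sub_mem] at this ⊢
    have hi := (mem_smul_top_pi (I ^ m) _).mp this i
    simpa [Ideal.smul_eq_mul, Ideal.mul_top] using hi
  choose L hL using hcomp
  refine ⟨L, fun n => ?_⟩
  rw [SModEq.sub_mem]
  rw [mem_smul_top_pi]
  intro i
  have := hL i n
  rw [SModEq.sub_mem] at this
  simpa [Ideal.smul_eq_mul, Ideal.mul_top] using this

lemma isPrecomplete_of_finite (M : Type*) [AddCommGroup M] [Module R M]
    [Module.Finite R M] [IsPrecomplete I R] : IsPrecomplete I M := by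
  classical
  obtain ⟨r, π, hπ⟩ := Module.Finite.exists_fin' R M
  have hmap : ∀ k : ℕ, Submodule.map π (I ^ k • ⊤ : Submodule R (Fin r → R)) =
      (I ^ k • ⊤ : Submodule R M) := by
    intro k
    rw [Submodule.map_smul'', Submodule.map_top, LinearMap.range_eq_top.mpr hπ]
  constructor
  intro f hf
  -- increments of f
  have hstep : ∀ k, ∃ d : Fin r → R, d ∈ (I ^ k • ⊤ : Submodule R (Fin r → R)) ∧
      π d = f (k + 1) - f k := by
    intro k
    have : f (k + 1) - f k ∈ (I ^ k • ⊤ : Submodule R M) := by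
      have := hf (Nat.le_succ k)
      rw [SModEq.sub_mem] at this
      simpa using (I ^ k • ⊤ : Submodule R M).neg_mem this
    rw [← hmap k] at this
    obtain ⟨d, hd, hd2⟩ := this
    exact ⟨d, hd, hd2⟩
  choose d hd1 hd2 using hstep
  obtain ⟨g0, hg0⟩ := hπ (f 0)
  -- lifted sequence
  set g : ℕ → (Fin r → R) := fun k => Nat.rec g0 (fun k gk => gk + d k) k with hgdef
  have hgπ : ∀ k, π (g k) = f k := by
    intro k
    induction k with
    | zero => simpa [hgdef] using hg0
    | succ k ih =>
      have : g (k + 1) = g k + d k := rfl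
      rw [this, map_add, ih, hd2 k]
      abel
  have hginc : ∀ k, g (k + 1) - g k ∈ (I ^ k • ⊤ : Submodule R (Fin r → R)) := by
    intro k
    have : g (k + 1) = g k + d k := rfl
    rw [this]
    simpa using hd1 k
  have hgc : ∀ {m n : ℕ}, m ≤ n → g m ≡ g n [SMOD (I ^ m • ⊤ : Submodule R (Fin r → R))] := by
    intro m n hmn
    rw [SModEq.sub_mem]
    induction n with
    | zero =>
      have : m = 0 := Nat.le_zero.mp hmn
      subst this; simp
    | succ n ih =>
      rcases Nat.lt_or_ge m (n + 1) with h | h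
      · have hmn' : m ≤ n := Nat.lt_succ_iff.mp h
        have h1 := ih hmn'
        have h2 : g (n + 1) - g n ∈ (I ^ m • ⊤ : Submodule R (Fin r → R)) :=
          Submodule.smul_mono (Ideal.pow_le_pow_right hmn') le_rfl (hginc n)
        have heq : g m - g (n + 1) = (g m - g n) - (g (n + 1) - g n) := by abel
        rw [heq]
        exact Submodule.sub_mem _ h1 h2
      · have : m = n + 1 := le_antisymm hmn h
        subst this; simp
  haveI : IsPrecomplete I (Fin r → R) := isPrecomplete_pi I
  obtain ⟨Lg, hLg⟩ := IsPrecomplete.prec inferInstance hgc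
  refine ⟨π Lg, fun n => ?_⟩
  rw [SModEq.sub_mem]
  have := hLg n
  rw [SModEq.sub_mem] at this
  have : π (g n - Lg) ∈ Submodule.map π (I ^ n • ⊤ : Submodule R (Fin r → R)) :=
    Submodule.mem_map_of_mem this
  rw [hmap n] at this
  simpa [map_sub, hgπ n] using this

end Adic

section Local
variable {A : Type*} [CommRing A] [IsLocalRing A]


lemma isArtinian_of_smul_top_eq_bot (M : Type*) [AddCommGroup M] [Module A M]
    [Module.Finite A M] (h : (maximalIdeal A • ⊤ : Submodule A M) = ⊥) :
    IsArtinian A M := by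
  have htor : Module.IsTorsionBySet A M (maximalIdeal A : Set A) := by
    intro x a
    have : a.1 • x ∈ (maximalIdeal A • ⊤ : Submodule A M) :=
      Submodule.smul_mem_smul a.2 trivial
    rw [h] at this
    simpa using this
  letI := htor.module
  haveI : IsScalarTower A (A ⧸ maximalIdeal A) M := htor.isScalarTower
  haveI : Module.Finite (A ⧸ maximalIdeal A) M :=
    Module.Finite.of_restrictScalars_finite A _ M
  letI : Field (A ⧸ maximalIdeal A) := Ideal.Quotient.field (maximalIdeal A)
  haveI hart : IsArtinian (A ⧸ maximalIdeal A) M := isArtinian_of_fg_of_artinian'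
  let f : Submodule A M → Submodule (A ⧸ maximalIdeal A) M := fun p =>
    { carrier := p
      add_mem' := fun hx hy => p.add_mem hx hy
      zero_mem' := p.zero_mem
      smul_mem' := by
        rintro c x hx
        obtain ⟨a, rfl⟩ := Ideal.Quotient.mk_surjective c
        have heq : (Ideal.Quotient.mk (maximalIdeal A) a) • x = a • x := htor.mk_smul a x
        exact heq ▸ p.smul_mem a hx }
  have hmono : StrictMono f := fun p q h => by
    rw [lt_iff_le_not_ge] at h ⊢
    exact ⟨fun x hx => h.1 hx, fun hc => h.2 fun x hx => hc hx⟩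
  exact hmono.wellFoundedLT

lemma isArtinian_of_pow_smul_top_eq_bot [IsNoetherianRing A] :
    ∀ (k : ℕ) (M : Type v) [AddCommGroup M] [Module A M] [Module.Finite A M],
      (maximalIdeal A ^ k • ⊤ : Submodule A M) = ⊥ → IsArtinian A M := by
  intro k
  induction k with
  | zero =>
    intro M _ _ _ h
    simp only [pow_zero, Ideal.one_eq_top, Submodule.top_smul] at h
    haveI : Subsingleton M := subsingleton_iff_forall_eq 0 |>.mpr fun x => by
      have : x ∈ (⊤ : Submodule A M) := trivial
      rw [h] at this; simpa using this
    infer_instance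
  | succ k ih =>
    intro M _ _ _ h
    haveI : IsNoetherian A M := inferInstance
    set S : Submodule A M := maximalIdeal A • ⊤ with hS
    haveI : Module.Finite A S := Module.Finite.iff_fg.mpr (IsNoetherian.noetherian S)
    -- the submodule S is killed by m^k
    have hSk : (maximalIdeal A ^ k • ⊤ : Submodule A S) = ⊥ := by
      rw [← Submodule.map_injective_of_injective (Submodule.injective_subtype S) |>.eq_iff]
      rw [Submodule.map_smul'', Submodule.map_top, Submodule.range_subtype, Submodule.map_bot]
      rw [hS, smul_smul, ← pow_succ]
      exact h
    haveI hart1 : IsArtinian A S := ih S hSk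
    -- the quotient M/S is killed by m
    have hQ : (maximalIdeal A • ⊤ : Submodule A (M ⧸ S)) = ⊥ := by
      have htop : (⊤ : Submodule A (M ⧸ S)) = Submodule.map S.mkQ ⊤ := by
        rw [Submodule.map_top, Submodule.range_mkQ]
      rw [htop, ← Submodule.map_smul'', eq_bot_iff]
      rintro x ⟨y, hy, rfl⟩
      rw [Submodule.mem_bot, Submodule.mkQ_apply, Submodule.Quotient.mk_eq_zero]
      exact hy
    haveI : Module.Finite A (M ⧸ S) :=
      Module.Finite.of_surjective S.mkQ (Submodule.mkQ_surjective S)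
    haveI hart2 : IsArtinian A (M ⧸ S) := isArtinian_of_smul_top_eq_bot _ hQ
    exact isArtinian_of_range_eq_ker S.subtype S.mkQ
      (by rw [Submodule.range_subtype, Submodule.ker_mkQ])


lemma eq_zero_of_mem_pow_smul_top [IsNoetherianRing A]
    (M : Type*) [AddCommGroup M] [Module A M] [Module.Finite A M] {x : M}
    (hx : ∀ j : ℕ, x ∈ ((maximalIdeal A) ^ j • ⊤ : Submodule A M)) : x = 0 := by
  obtain ⟨r, f, hf⟩ := Module.Finite.exists_fin' A M
  set K := LinearMap.ker f with hK
  let e := f.quotKerEquivOfSurjective hf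
  set y := e.symm x with hy0
  have hy : ∀ j : ℕ, y ∈ ((maximalIdeal A) ^ j • ⊤ : Submodule A ((Fin r → A) ⧸ K)) := by
    intro j
    have h1 := Submodule.mem_map_of_mem (f := e.symm.toLinearMap) (hx j)
    rwa [Submodule.map_smul'', Submodule.map_top, LinearEquiv.range] at h1
  haveI : Module.Finite A ((Fin r → A) ⧸ K) :=
    Module.Finite.of_surjective K.mkQ (Submodule.mkQ_surjective K)
  have hbot := Ideal.iInf_pow_smul_eq_bot_of_isLocalRing
    (R := A) (M := (Fin r → A) ⧸ K) (maximalIdeal A) (Ideal.IsMaximal.ne_top inferInstance)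
  have hyz : y = 0 := by
    rw [← Submodule.mem_bot (R := A), ← hbot, Submodule.mem_iInf]
    exact hy
  have : e.symm x = 0 := hy0 ▸ hyz
  simpa using congrArg e this

lemma mem_of_mem_sup_pow_smul [IsNoetherianRing A] {N : Type*} [AddCommGroup N]
    [Module A N] [Module.Finite A N] (P : Submodule A N) {x : N}
    (hx : ∀ j : ℕ, x ∈ P ⊔ (maximalIdeal A ^ j • ⊤ : Submodule A N)) : x ∈ P := by
  haveI : Module.Finite A (N ⧸ P) :=
    Module.Finite.of_surjective P.mkQ (Submodule.mkQ_surjective P)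
  have key : ∀ j : ℕ, P.mkQ x ∈ (maximalIdeal A ^ j • ⊤ : Submodule A (N ⧸ P)) := by
    intro j
    obtain ⟨p, hp, s, hs, rfl⟩ := Submodule.mem_sup.mp (hx j)
    have h1 : P.mkQ (p + s) = P.mkQ s := by
      simp [Submodule.mkQ_apply, Submodule.Quotient.mk_add,
        (Submodule.Quotient.mk_eq_zero P).mpr hp]
    rw [h1]
    have : P.mkQ s ∈ Submodule.map P.mkQ (maximalIdeal A ^ j • ⊤ : Submodule A N) :=
      Submodule.mem_map_of_mem hs
    rwa [Submodule.map_smul'', Submodule.map_top, Submodule.range_mkQ] at this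
  have hzero := eq_zero_of_mem_pow_smul_top (N ⧸ P) key
  rwa [Submodule.mkQ_apply, Submodule.Quotient.mk_eq_zero] at hzero

lemma chevalley [IsNoetherianRing A] [IsAdicComplete (maximalIdeal A) A]
    {N : Type*} [AddCommGroup N] [Module A N] [Module.Finite A N]
    (𝒮 : Set (Submodule A N)) (n : ℕ) :
    ∃ F : Finset (Submodule A N), ↑F ⊆ 𝒮 ∧
      sInf (F : Set (Submodule A N)) ≤ sInf 𝒮 ⊔ (maximalIdeal A ^ n • ⊤) := by
  classical
  set I : Ideal A := maximalIdeal A with hI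
  set Q : Submodule A N := sInf 𝒮 with hQ
  set T : ℕ → Finset (Submodule A N) → Submodule A N :=
    fun k F => sInf (F : Set (Submodule A N)) ⊔ (Q ⊔ (I ^ k • ⊤)) with hT
  -- minimal elements
  have hminfam : ∀ k : ℕ, ∃ F : Finset (Submodule A N), ↑F ⊆ 𝒮 ∧
      ∀ F' : Finset (Submodule A N), ↑F' ⊆ 𝒮 → T k F ≤ T k F' := by
    intro k
    haveI : Module.Finite A (N ⧸ (I ^ k • ⊤ : Submodule A N)) :=
      Module.Finite.of_surjective _ (Submodule.mkQ_surjective _)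
    have hbot : (I ^ k • ⊤ : Submodule A (N ⧸ (I ^ k • ⊤ : Submodule A N))) = ⊥ := by
      have htop : (⊤ : Submodule A (N ⧸ (I ^ k • ⊤ : Submodule A N))) =
          Submodule.map (I ^ k • ⊤ : Submodule A N).mkQ ⊤ := by
        rw [Submodule.map_top, Submodule.range_mkQ]
      rw [htop, ← Submodule.map_smul'', eq_bot_iff]
      rintro x ⟨y, hy, rfl⟩
      rw [Submodule.mem_bot, Submodule.mkQ_apply, Submodule.Quotient.mk_eq_zero]
      exact hy
    haveI : IsArtinian A (N ⧸ (I ^ k • ⊤ : Submodule A N)) :=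
      isArtinian_of_pow_smul_top_eq_bot k _ hbot
    set π := (I ^ k • ⊤ : Submodule A N).mkQ
    set 𝒞 : Set (Submodule A (N ⧸ (I ^ k • ⊤ : Submodule A N))) :=
      (fun F : Finset (Submodule A N) => Submodule.map π (T k F)) '' {F | ↑F ⊆ 𝒮} with h𝒞
    obtain ⟨C, hC, hCmin⟩ := IsArtinian.set_has_minimal 𝒞
      ⟨Submodule.map π (T k ∅), ⟨∅, by simp, rfl⟩⟩
    obtain ⟨F₀, hF₀, rfl⟩ := hC
    have hIkT : ∀ F : Finset (Submodule A N), (I ^ k • ⊤ : Submodule A N) ≤ T k F :=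
      fun F => le_trans le_sup_right le_sup_right
    refine ⟨F₀, hF₀, fun F' hF' => ?_⟩
    have hsub : ((F₀ ∪ F' : Finset (Submodule A N)) : Set (Submodule A N)) ⊆ 𝒮 := by
      rw [Finset.coe_union]
      exact Set.union_subset hF₀ hF'
    have hle : T k (F₀ ∪ F') ≤ T k F₀ := by
      apply sup_le_sup_right
      apply sInf_le_sInf
      rw [Finset.coe_union]
      exact Set.subset_union_left
    have hle' : T k (F₀ ∪ F') ≤ T k F' := by
      apply sup_le_sup_right
      apply sInf_le_sInf
      rw [Finset.coe_union]
      exact Set.subset_union_right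
    have hmaple : Submodule.map π (T k (F₀ ∪ F')) ≤ Submodule.map π (T k F₀) :=
      Submodule.map_mono hle
    have hmapeq : Submodule.map π (T k (F₀ ∪ F')) = Submodule.map π (T k F₀) := by
      by_contra hne
      exact hCmin _ ⟨F₀ ∪ F', hsub, rfl⟩ (lt_of_le_of_ne hmaple hne)
    have hTeq : T k (F₀ ∪ F') = T k F₀ := by
      have h1 := congrArg (Submodule.comap π) hmapeq
      rwa [Submodule.comap_map_mkQ, Submodule.comap_map_mkQ,
        sup_eq_right.mpr (hIkT (F₀ ∪ F')), sup_eq_right.mpr (hIkT F₀)] at h1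
    rw [← hTeq]
    exact hle'
  choose G hG1 hG2 using hminfam
  set E : ℕ → Submodule A N := fun k => T k (G k) with hE
  -- E k is below P ⊔ I^k for every P ∈ 𝒮
  have hE_le : ∀ k, ∀ P ∈ 𝒮, E k ≤ P ⊔ (I ^ k • ⊤ : Submodule A N) := by
    intro k P hP
    have h1 : E k ≤ T k {P} := hG2 k {P} (by simpa using hP)
    have h2 : T k {P} ≤ P ⊔ (I ^ k • ⊤ : Submodule A N) := by
      rw [hT]
      simp only [Finset.coe_singleton, csInf_singleton]
      refine sup_le le_sup_left (sup_le (le_trans ?_ le_sup_left) le_sup_right)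
      exact sInf_le hP
    exact le_trans h1 h2
  have hE_step : ∀ k, E k ≤ E (k + 1) ⊔ (I ^ k • ⊤ : Submodule A N) := by
    intro k
    have h1 : E k ≤ T k (G (k + 1)) := hG2 k (G (k + 1)) (hG1 (k + 1))
    refine le_trans h1 ?_
    rw [hT, hE]
    refine sup_le (le_trans le_sup_left le_sup_left) (sup_le ?_ le_sup_right)
    exact le_trans (le_trans le_sup_left le_sup_right) le_sup_left
  -- main claim : every x in E n lies in Q ⊔ I^n
  have main : ∀ x ∈ E n, x ∈ Q ⊔ (I ^ n • ⊤ : Submodule A N) := by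
    intro x hx
    have hstep : ∀ (k : ℕ) (y : N), y ∈ E k →
        ∃ y', y' ∈ E (k + 1) ∧ y - y' ∈ (I ^ k • ⊤ : Submodule A N) := by
      intro k y hy
      obtain ⟨a, ha, b, hb, hab⟩ := Submodule.mem_sup.mp (hE_step k hy)
      exact ⟨a, ha, by rw [← hab]; simpa using hb⟩
    choose! step hstep1 hstep2 using hstep
    set c : ℕ → N := fun k => Nat.rec x (fun k yk => step (n + k) yk) k with hc
    have hcmem : ∀ k, c k ∈ E (n + k) := by
      intro k
      induction k with
      | zero => exact hx
      | succ k ih => exact hstep1 (n + k) (c k) ih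
    have hcinc : ∀ k, c k - c (k + 1) ∈ (I ^ (n + k) • ⊤ : Submodule A N) :=
      fun k => hstep2 (n + k) (c k) (hcmem k)
    set fs : ℕ → N := fun k => c (k - n) with hfs
    have hfs_inc : ∀ m, fs m - fs (m + 1) ∈ (I ^ m • ⊤ : Submodule A N) := by
      intro m
      rcases Nat.lt_or_ge m n with h | h
      · have h1 : m - n = 0 := Nat.sub_eq_zero_of_le (le_of_lt h)
        have h2 : m + 1 - n = 0 := Nat.sub_eq_zero_of_le h
        simp [hfs, h1, h2]
      · have h1 : m + 1 - n = (m - n) + 1 := by omega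
        have h2 : n + (m - n) = m := by omega
        have := hcinc (m - n)
        rw [h2] at this
        simpa [hfs, h1] using this
    have hfs_cauchy : ∀ {m m' : ℕ}, m ≤ m' →
        fs m ≡ fs m' [SMOD (I ^ m • ⊤ : Submodule A N)] := by
      intro m m' hmm'
      rw [SModEq.sub_mem]
      induction m' with
      | zero =>
        have : m = 0 := Nat.le_zero.mp hmm'
        subst this; simp
      | succ m' ih =>
        rcases Nat.lt_or_ge m (m' + 1) with h | h
        · have hmm'' : m ≤ m' := Nat.lt_succ_iff.mp h
          have h1 := ih hmm''
          have h2 : fs m' - fs (m' + 1) ∈ (I ^ m • ⊤ : Submodule A N) :=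
            Submodule.smul_mono (Ideal.pow_le_pow_right hmm'') le_rfl (hfs_inc m')
          have heq : fs m - fs (m' + 1) = (fs m - fs m') + (fs m' - fs (m' + 1)) := by abel
          rw [heq]
          exact Submodule.add_mem _ h1 h2
        · have : m = m' + 1 := le_antisymm hmm' h
          subst this; simp
    haveI : IsPrecomplete I N := isPrecomplete_of_finite I N
    obtain ⟨L, hL⟩ := IsPrecomplete.prec inferInstance hfs_cauchy
    have hLdist : ∀ k, fs k - L ∈ (I ^ k • ⊤ : Submodule A N) := by
      intro k
      have := hL k
      rwa [SModEq.sub_mem] at this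
    have hLQ : L ∈ Q := by
      rw [hQ, Submodule.mem_sInf]
      intro P hP
      apply mem_of_mem_sup_pow_smul P
      intro j
      have h1 : fs (n + j) = c j := by simp [hfs, Nat.add_sub_cancel_left]
      have h2 : c j ∈ P ⊔ (I ^ j • ⊤ : Submodule A N) :=
        (le_trans (hE_le (n + j) P hP) (sup_le_sup_left (Submodule.smul_mono
          (Ideal.pow_le_pow_right (Nat.le_add_left j n)) le_rfl) P)) (hcmem j)
      have h3 : fs (n + j) - L ∈ (I ^ j • ⊤ : Submodule A N) :=
        Submodule.smul_mono (Ideal.pow_le_pow_right (Nat.le_add_left j n)) le_rfl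
          (hLdist (n + j))
      have h4 : c j - L ∈ (I ^ j • ⊤ : Submodule A N) := by rw [← h1]; exact h3
      have heq : L = c j - (c j - L) := by abel
      rw [heq]
      exact Submodule.sub_mem _ h2 (Submodule.mem_sup_right h4)
    have hfsn : fs n = x := by
      show c (n - n) = x
      rw [Nat.sub_self]
      rw [hc]
      rfl
    have hxL : x - L ∈ (I ^ n • ⊤ : Submodule A N) := by
      have := hLdist n
      rwa [hfsn] at this
    have : x = L + (x - L) := by abel
    rw [this]
    exact Submodule.add_mem_sup hLQ hxL
  refine ⟨G n, hG1 n, fun x hxinf => ?_⟩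
  apply main
  exact Submodule.mem_sup_left hxinf

end Local

section MainAux

variable {A : Type u} {B : Type v} [CommRing A] [CommRing B] [Algebra A B]

open TensorProduct in
lemma lTensor_mem_map_smul {U : Type*} {V : Type*}
    [AddCommGroup U] [Module A U] [AddCommGroup V] [Module A V]
    (J : Ideal A) (g : V →ₗ[A] U) (hg : LinearMap.range g ≤ (J • ⊤ : Submodule A U))
    (w : B ⊗[A] V) :
    LinearMap.lTensor B g w ∈
      (J.map (algebraMap A B) • ⊤ : Submodule B (B ⊗[A] U)) := by
  induction w using TensorProduct.induction_on with
  | zero => simp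
  | add x y hx hy => rw [map_add]; exact Submodule.add_mem _ hx hy
  | tmul bb v =>
    have hgv : g v ∈ (J • ⊤ : Submodule A U) := hg ⟨v, rfl⟩
    rw [LinearMap.lTensor_tmul]
    refine Submodule.smul_induction_on hgv ?_ ?_
    · intro r hr u _
      have h1 : bb ⊗ₜ[A] (r • u) = (algebraMap A B r) • (bb ⊗ₜ[A] u) := by
        rw [tmul_smul, algebraMap_smul]
      rw [h1]
      exact Submodule.smul_mem_smul (Ideal.mem_map_of_mem _ hr) trivial
    · intro u1 u2 h1 h2
      rw [tmul_add]
      exact Submodule.add_mem _ h1 h2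

end MainAux

/-- Let `φ : (A,a) → (B,b)` be a flat local homomorphism of complete
Noetherian local rings.  Then `B` is `∩`-flat as an `A`-module: for every finitely
generated `A`-module `N` and every family of submodules of `N`, `B ⊗_A (⋂ N_λ)` equals
`⋂ (B ⊗_A N_λ)` inside `B ⊗_A N`. -/
theorem stmt12 (A : Type u) (B : Type v) [CommRing A] [CommRing B]
    [IsLocalRing A] [IsLocalRing B] [IsNoetherianRing A] [IsNoetherianRing B]
    [IsAdicComplete (maximalIdeal A) A] [IsAdicComplete (maximalIdeal B) B]
    [Algebra A B] [IsLocalHom (algebraMap A B)] [Module.Flat A B] :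
    IsInterFlat A B := by
  classical
  refine ⟨inferInstance, ?_⟩
  intro N _ _ hfin 𝒮
  haveI : Module.Finite A N := hfin
  apply le_antisymm
  · exact le_iInf₂ fun P hP => range_lTensor_mono (sInf_le hP)
  · intro z hz
    have hzP : ∀ P ∈ 𝒮, z ∈ LinearMap.range (LinearMap.lTensor B P.subtype) := by
      intro P hP
      exact (Submodule.mem_iInf _).mp ((Submodule.mem_iInf _).mp hz P) hP
    rw [range_lTensor_subtype_eq_ker, LinearMap.mem_ker]
    set Q : Submodule A N := sInf 𝒮 with hQdef
    haveI : Module.Finite A (N ⧸ Q) :=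
      Module.Finite.of_surjective Q.mkQ (Submodule.mkQ_surjective Q)
    set zb := LinearMap.lTensor B Q.mkQ z with hzb
    -- show zb lies in every power of the maximal ideal of B
    have key : ∀ j : ℕ, zb ∈
        ((maximalIdeal B) ^ j • ⊤ : Submodule B (B ⊗[A] (N ⧸ Q))) := by
      intro j
      obtain ⟨F, hF𝒮, hFle⟩ := chevalley 𝒮 j
      -- z is in the range of the tensored inclusion of sInf F
      have hzF : z ∈ LinearMap.range
          (LinearMap.lTensor B (sInf (F : Set (Submodule A N))).subtype) := by
        rw [range_lTensor_sInf_finset]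
        rw [Submodule.mem_iInf]
        intro P
        rw [Submodule.mem_iInf]
        intro hP
        exact hzP P (hF𝒮 hP)
      have hz2 : z ∈ LinearMap.range
          (LinearMap.lTensor B (Q ⊔ (maximalIdeal A ^ j • ⊤ : Submodule A N)).subtype) :=
        range_lTensor_mono hFle hzF
      obtain ⟨w, hw⟩ := hz2
      set g : ↥(Q ⊔ (maximalIdeal A ^ j • ⊤ : Submodule A N)) →ₗ[A] N ⧸ Q :=
        Q.mkQ ∘ₗ (Q ⊔ (maximalIdeal A ^ j • ⊤ : Submodule A N)).subtype with hg
      have hzbw : zb = LinearMap.lTensor B g w := by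
        rw [hzb, ← hw, hg, LinearMap.lTensor_comp, LinearMap.comp_apply]
      have hrange : LinearMap.range g ≤ ((maximalIdeal A ^ j) • ⊤ : Submodule A (N ⧸ Q)) := by
        rw [hg, LinearMap.range_comp, Submodule.range_subtype, Submodule.map_sup,
          Submodule.map_smul'', Submodule.map_top, Submodule.range_mkQ]
        have hbot : Submodule.map Q.mkQ Q = ⊥ := by
          rw [eq_bot_iff]
          rintro x ⟨y, hy, rfl⟩
          rw [Submodule.mem_bot, Submodule.mkQ_apply, Submodule.Quotient.mk_eq_zero]
          exact hy
        rw [hbot, bot_sup_eq]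
      have hmem := lTensor_mem_map_smul (maximalIdeal A ^ j) g hrange w
      rw [← hzbw] at hmem
      have h1 : (maximalIdeal A).map (algebraMap A B) ≤ maximalIdeal B := by
        rw [Ideal.map_le_iff_le_comap]
        intro r hr
        exact map_nonunit (algebraMap A B) r hr
      have hmaple : ((maximalIdeal A) ^ j).map (algebraMap A B) ≤ (maximalIdeal B) ^ j := by
        rw [Ideal.map_pow]
        exact Ideal.pow_right_mono h1 j
      exact Submodule.smul_mono hmaple le_rfl hmem
    exact eq_zero_of_mem_pow_smul_top (A := B) (B ⊗[A] (N ⧸ Q)) key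
end

section
/- Let K be a field of prime characteristic p, T = K[x_1,…,x_n], and R = K[[x_1,…,x_n]]. Let A be an ideal of T and u ∈ T. Then (AR)^{⋆^e u} = (A^{⋆^e u})R for every e ≥ 1. -/
/-- The ascending chain `A_0 = A`, `A_{i+1} = (u A_i)~^{(e)} + A_i` defining the
`⋆`-closure. -/
def Ideal.starChain {T : Type*} [CommRing T] (u : T) (q : ℕ) (A : Ideal T) : ℕ → Ideal T
  | 0 => A
  | i + 1 =>
      Ideal.tilde q (Ideal.span {u} * Ideal.starChain u q A i) + Ideal.starChain u q A i

/-- The `⋆`-closure `A^{⋆^e u}`: the stable value of the chain `A_i`. -/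
def Ideal.starClosure {T : Type*} [CommRing T] (u : T) (q : ℕ) (A : Ideal T) : Ideal T :=
  ⨆ i, Ideal.starChain u q A i

/-!
Write `q = p ^ e` and fix a basis `(b_j)` of `K` over its subfield `K^q` of `q`-th powers. A
polynomial or power series `g` splits as `g = ∑_{j, β} b_j x^β g_{j,β} ^ q` with `β < q`
componentwise, where the components `g ↦ g_{j,β}` are additive and satisfy
`(a h ^ q)_{j,β} = a_{j,β} h`. Consequently `g ∈ L^[q]` iff every `g_{j,β}` lies in `L`, so
`Ã^(e)` is the ideal generated by the components of the elements of `A`, both in `T` and in `R`.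
A polynomial has the same components in `T` and in `R`, so `Ã^(e)` commutes with extension to
`R`, and hence so does every step of the chain defining the `⋆`-closure.
-/

namespace Ideal

variable {T R ι : Type*} [CommRing T] [CommRing R] {q : ℕ}

theorem tilde_eq_of_le_frobPow_iff {A B : Ideal T}
    (h : ∀ L : Ideal T, A ≤ L.frobPow q ↔ B ≤ L) : tilde q A = B :=
  le_antisymm (sInf_le ((h B).2 le_rfl)) (le_sInf fun L hL => (h L).1 hL)

theorem map_mem_of_mem_frobPow {d : R →+ R} (hd : ∀ a b, d (a * b ^ q) = d a * b)
    {L : Ideal R} {x : R} (hx : x ∈ L.frobPow q) : d x ∈ L := by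
  -- `d` is not `R`-linear, so induct on a statement that is stable under multiplication.
  suffices ∀ r, d (r * x) ∈ L by simpa using this 1
  induction hx using Submodule.span_induction with
  | mem _ hy =>
    obtain ⟨y, hy, rfl⟩ := hy
    exact fun r => hd r y ▸ L.mul_mem_left _ hy
  | zero => simp
  | add y z _ _ hy hz => exact fun r => by simpa [mul_add] using L.add_mem (hy r) (hz r)
  | smul s y _ hy => exact fun r => by simpa [mul_assoc] using hy (r * s)

def componentIdeal (c : ι → T →+ T) (C : Ideal T) : Ideal T :=
  span (⋃ i, c i '' C)

theorem map_le_frobPow_iff (f : T →+* R) {c : ι → T →+ T} {d : ι → R →+ R}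
    (hd : ∀ i a b, d i (a * b ^ q) = d i a * b) (hfd : ∀ i g, f (c i g) = d i (f g))
    (hspan : ∀ g, g ∈ span (Set.range fun i => c i g ^ q)) (C : Ideal T) (L : Ideal R) :
    C.map f ≤ L.frobPow q ↔ (componentIdeal c C).map f ≤ L := by
  simp only [map_le_iff_le_comap, componentIdeal, span_le, Set.iUnion_subset_iff,
    Set.image_subset_iff]
  refine ⟨fun h i g hg => ?_, fun h g hg => ?_⟩
  · simpa [hfd] using map_mem_of_mem_frobPow (hd i) (h hg)
  · have hle : span (Set.range fun i => f (c i g) ^ q) ≤ L.frobPow q := by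
      rw [span_le]
      rintro _ ⟨i, rfl⟩
      exact subset_span ⟨_, h i hg, rfl⟩
    apply hle
    simpa only [map_span, ← Set.range_comp, Function.comp_def, map_pow] using
      mem_map_of_mem f (hspan g)

theorem tilde_map_eq_map_componentIdeal (f : T →+* R) {c : ι → T →+ T} {d : ι → R →+ R}
    (hd : ∀ i a b, d i (a * b ^ q) = d i a * b) (hfd : ∀ i g, f (c i g) = d i (f g))
    (hspan : ∀ g, g ∈ span (Set.range fun i => c i g ^ q)) (C : Ideal T) :
    tilde q (C.map f) = (componentIdeal c C).map f :=
  tilde_eq_of_le_frobPow_iff (map_le_frobPow_iff f hd hfd hspan C)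

theorem tilde_eq_componentIdeal {c : ι → T →+ T} (hc : ∀ i a b, c i (a * b ^ q) = c i a * b)
    (hspan : ∀ g, g ∈ span (Set.range fun i => c i g ^ q)) (C : Ideal T) :
    tilde q C = componentIdeal c C := by
  simpa using tilde_map_eq_map_componentIdeal (RingHom.id T) hc (fun _ _ => rfl) hspan C

theorem starChain_map (f : T →+* R)
    (hf : ∀ C : Ideal T, tilde q (C.map f) = (tilde q C).map f) (u : T) (A : Ideal T) (i : ℕ) :
    starChain (f u) q (A.map f) i = (starChain u q A i).map f := by
  induction i with
  | zero => rfl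
  | succ i ih =>
    rw [starChain, starChain, ih, Submodule.add_eq_sup, Submodule.add_eq_sup, map_sup, ← hf,
      Ideal.map_mul, map_span, Set.image_singleton]

theorem starClosure_map (f : T →+* R)
    (hf : ∀ C : Ideal T, tilde q (C.map f) = (tilde q C).map f) (u : T) (A : Ideal T) :
    starClosure (f u) q (A.map f) = (starClosure u q A).map f := by
  simp only [starClosure, starChain_map f hf, map_iSup]

end Ideal

namespace Finsupp

variable {σ : Type*} [Finite σ] {q : ℕ}

noncomputable def ofFinVec (β : σ → Fin q) : σ →₀ ℕ :=
  equivFunOnFinite.symm fun i => β i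

@[simp] theorem ofFinVec_apply (β : σ → Fin q) (i : σ) : ofFinVec β i = β i := rfl

theorem exists_eq_smul_add_ofFinVec (hq : q ≠ 0) (m : σ →₀ ℕ) :
    ∃ (α : σ →₀ ℕ) (β : σ → Fin q), m = q • α + ofFinVec β :=
  ⟨m.mapRange (· / q) (Nat.zero_div q),
    fun i => ⟨m i % q, Nat.mod_lt _ (Nat.pos_of_ne_zero hq)⟩,
    by ext i; simp [Nat.div_add_mod]⟩

theorem smul_add_ofFinVec_injective (hq : q ≠ 0) (β : σ → Fin q) :
    Function.Injective fun α : σ →₀ ℕ => q • α + ofFinVec β :=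
  (add_left_injective _).comp (smul_right_injective _ hq)

end Finsupp

theorem Nat.eq_of_dvd_mul_add_sub {q a b c : ℕ} (hb : b < q) (hc : c < q) (hle : c ≤ q * a + b)
    (h : q ∣ q * a + b - c) : c = b := by
  have := (Nat.modEq_iff_dvd' hle).2 h
  rwa [Nat.ModEq, Nat.mul_add_mod, Nat.mod_eq_of_lt hb, Nat.mod_eq_of_lt hc] at this

namespace MvPowerSeries

open Finsupp

variable {σ R : Type*} [CommRing R]

noncomputable def mapAddHom (φ : R →+ R) : MvPowerSeries σ R →+ MvPowerSeries σ R where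
  toFun g α := φ (coeff α g)
  map_zero' := funext fun _ => map_zero φ
  map_add' _ _ := funext fun _ => map_add φ _ _

@[simp] theorem coeff_mapAddHom (φ : R →+ R) (g : MvPowerSeries σ R) (α : σ →₀ ℕ) :
    coeff α (mapAddHom φ g) = φ (coeff α g) := rfl

theorem mapAddHom_mul_map {φ : R →+ R} {ψ : R →+* R} (hφ : ∀ x y, φ (x * ψ y) = φ x * y)
    (a b : MvPowerSeries σ R) : mapAddHom φ (a * map ψ b) = mapAddHom φ a * b := by
  classical
  ext α
  rw [coeff_mapAddHom, coeff_mul, coeff_mul, map_sum]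
  simp [hφ]

theorem pow_eq_expand_map_iterateFrobenius {p : ℕ} [ExpChar R p] (e : ℕ)
    (h : MvPowerSeries σ R) :
    h ^ p ^ e = expand (p ^ e) (pow_ne_zero e (expChar_ne_zero R p))
      (map (iterateFrobenius R p e) h) := by
  rw [← map_expand, map_iterateFrobenius_expand p (expChar_ne_zero R p)]

variable [Fintype σ] {q : ℕ}

theorem coeff_smul_add_ofFinVec_monomial_mul_expand (hq : q ≠ 0) (α : σ →₀ ℕ)
    (β γ : σ → Fin q) (h : MvPowerSeries σ R) :
    coeff (q • α + ofFinVec β) (monomial (ofFinVec γ) 1 * expand q hq h) =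
      if γ = β then coeff α h else 0 := by
  rw [coeff_monomial_mul, one_mul]
  split_ifs with hle hγ hγ
  · rw [hγ, add_tsub_cancel_right, coeff_expand_smul]
  · obtain ⟨i, hi⟩ := Function.ne_iff.1 hγ
    refine coeff_expand_of_not_dvd q hq h (i := i) fun hdvd => hi (Fin.ext ?_)
    simpa using
      Nat.eq_of_dvd_mul_add_sub (β i).2 (γ i).2 (by simpa using hle i) (by simpa using hdvd)
  · exact absurd (hγ ▸ le_add_self) hle
  · rfl

variable (q) in
noncomputable def slice (β : σ → Fin q) : MvPowerSeries σ R →+ MvPowerSeries σ R where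
  toFun g α := coeff (q • α + ofFinVec β) g
  map_zero' := rfl
  map_add' _ _ := rfl

@[simp] theorem coeff_slice (β : σ → Fin q) (g : MvPowerSeries σ R) (α : σ →₀ ℕ) :
    coeff α (slice q β g) = coeff (q • α + ofFinVec β) g := rfl

theorem slice_monomial_mul_expand (hq : q ≠ 0) (β γ : σ → Fin q) (h : MvPowerSeries σ R) :
    slice q β (monomial (ofFinVec γ) 1 * expand q hq h) = if γ = β then h else 0 := by
  ext α
  rw [coeff_slice, coeff_smul_add_ofFinVec_monomial_mul_expand]
  split_ifs <;> simp

variable [DecidableEq σ]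

theorem sum_monomial_mul_expand_slice (hq : q ≠ 0) (g : MvPowerSeries σ R) :
    ∑ β : σ → Fin q, monomial (ofFinVec β) 1 * expand q hq (slice q β g) = g := by
  ext m
  obtain ⟨α, β, rfl⟩ := exists_eq_smul_add_ofFinVec hq m
  simp [map_sum, coeff_smul_add_ofFinVec_monomial_mul_expand]

theorem slice_mul_expand (hq : q ≠ 0) (β : σ → Fin q) (a c : MvPowerSeries σ R) :
    slice q β (a * expand q hq c) = slice q β a * c := by
  conv_lhs => rw [← sum_monomial_mul_expand_slice hq a]
  simp [Finset.sum_mul, mul_assoc, ← map_mul, slice_monomial_mul_expand]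

end MvPowerSeries

section FrobeniusRoots

variable {K : Type*} [Field K] {p : ℕ} [ExpChar K p] {e : ℕ}

variable (K p e) in
abbrev FrobBasisIndex := Module.Basis.ofVectorSpaceIndex (iterateFrobenius K p e).fieldRange K

variable (K p e) in
noncomputable abbrev frobBasis :
    Module.Basis (FrobBasisIndex K p e) (iterateFrobenius K p e).fieldRange K :=
  Module.Basis.ofVectorSpace _ _

noncomputable def rootCoord (j : FrobBasisIndex K p e) : K →+ K :=
  ((iterateFrobenius K p e).rangeRestrictFieldEquiv.symm.toRingHom.toAddMonoidHom).comp
    ((frobBasis K p e).coord j).toAddMonoidHom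

theorem pow_rootCoord (j : FrobBasisIndex K p e) (x : K) :
    rootCoord j x ^ p ^ e = (frobBasis K p e).coord j x := by
  rw [← iterateFrobenius_def]
  exact RingHom.rangeRestrictFieldEquiv_apply_symm_apply _ _

theorem rootCoord_mul_pow (j : FrobBasisIndex K p e) (x y : K) :
    rootCoord j (x * y ^ p ^ e) = rootCoord j x * y := by
  have hy : y ^ p ^ e ∈ (iterateFrobenius K p e).fieldRange := ⟨y, iterateFrobenius_def ..⟩
  have hroot : (iterateFrobenius K p e).rangeRestrictFieldEquiv.symm ⟨_, hy⟩ = y :=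
    (RingEquiv.symm_apply_eq _).2 (Subtype.ext (iterateFrobenius_def ..).symm)
  have : x * y ^ p ^ e = (⟨_, hy⟩ : (iterateFrobenius K p e).fieldRange) • x := mul_comm _ _
  simp [rootCoord, this, hroot, mul_comm]

theorem sum_frobBasis_mul_pow_rootCoord (x : K) {J : Finset (FrobBasisIndex K p e)}
    (hJ : ((frobBasis K p e).repr x).support ⊆ J) :
    ∑ j ∈ J, (frobBasis K p e j : K) * rootCoord j x ^ p ^ e = x := by
  simp_rw [pow_rootCoord, Module.Basis.coord_apply]
  rw [← Finset.sum_subset hJ fun j _ hj => by simp [Finsupp.notMem_support_iff.1 hj]]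
  conv_rhs => rw [← (frobBasis K p e).linearCombination_repr x]
  simp only [Finsupp.linearCombination_apply, Finsupp.sum]
  exact Finset.sum_congr rfl fun _ _ => mul_comm _ _

end FrobeniusRoots

namespace MvPowerSeries

open Finsupp

variable {σ K : Type*} [Fintype σ] [Field K] {p : ℕ} [ExpChar K p] {e : ℕ}

/-- With `q = p ^ e`, `g = ∑ j, ∑ β, b_j X^β (rootComponent j β g) ^ q` where `b` is
`frobBasis K p e`: see `sum_monomial_mul_rootComponent_pow`. -/
noncomputable def rootComponent (j : FrobBasisIndex K p e) (β : σ → Fin (p ^ e)) :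
    MvPowerSeries σ K →+ MvPowerSeries σ K :=
  (mapAddHom (rootCoord j)).comp (slice (p ^ e) β)

theorem coeff_rootComponent (j : FrobBasisIndex K p e) (β : σ → Fin (p ^ e))
    (g : MvPowerSeries σ K) (α : σ →₀ ℕ) :
    coeff α (rootComponent j β g) = rootCoord j (coeff (p ^ e • α + ofFinVec β) g) := rfl

variable [DecidableEq σ]

theorem rootComponent_mul_pow (j : FrobBasisIndex K p e) (β : σ → Fin (p ^ e))
    (a b : MvPowerSeries σ K) :
    rootComponent j β (a * b ^ p ^ e) = rootComponent j β a * b := by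
  rw [rootComponent, AddMonoidHom.comp_apply, pow_eq_expand_map_iterateFrobenius,
    slice_mul_expand, mapAddHom_mul_map fun x y => by rw [iterateFrobenius_def, rootCoord_mul_pow]]
  rfl

theorem sum_monomial_mul_rootComponent_pow (g : MvPowerSeries σ K)
    {J : Finset (FrobBasisIndex K p e)}
    (hJ : ∀ m, ((frobBasis K p e).repr (coeff m g)).support ⊆ J) :
    ∑ β : σ → Fin (p ^ e), ∑ j ∈ J,
      monomial (ofFinVec β) (frobBasis K p e j : K) * rootComponent j β g ^ p ^ e = g := by
  have hslice (β : σ → Fin (p ^ e)) : ∑ j ∈ J,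
      C (frobBasis K p e j : K) * map (iterateFrobenius K p e) (rootComponent j β g) =
        slice (p ^ e) β g := by
    ext α
    simpa [map_sum, coeff_C_mul, coeff_rootComponent, iterateFrobenius_def] using
      sum_frobBasis_mul_pow_rootCoord _ (hJ _)
  conv_rhs => rw [← sum_monomial_mul_expand_slice (pow_ne_zero e (expChar_ne_zero K p)) g]
  refine Finset.sum_congr rfl fun β _ => ?_
  rw [← hslice, map_sum, Finset.mul_sum]
  refine Finset.sum_congr rfl fun j _ => ?_
  rw [pow_eq_expand_map_iterateFrobenius, map_mul, expand_C, ← mul_assoc,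
    ← monomial_zero_eq_C_apply, monomial_mul_monomial, add_zero, one_mul]

end MvPowerSeries

namespace MvPolynomial

open Finsupp

variable {σ K : Type*} [Fintype σ] [Field K] {p : ℕ} [ExpChar K p] {e : ℕ}

noncomputable def rootComponent (j : FrobBasisIndex K p e) (β : σ → Fin (p ^ e)) :
    MvPolynomial σ K →+ MvPolynomial σ K :=
  AddMonoidAlgebra.coeffAddEquiv.symm.toAddMonoidHom.comp <|
    (mapRange.addMonoidHom (rootCoord j)).comp <|
      (comapDomain.addMonoidHom
        (smul_add_ofFinVec_injective (pow_ne_zero e (expChar_ne_zero K p)) β)).comp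
        AddMonoidAlgebra.coeffAddEquiv.toAddMonoidHom

theorem coeff_rootComponent (j : FrobBasisIndex K p e) (β : σ → Fin (p ^ e))
    (g : MvPolynomial σ K) (α : σ →₀ ℕ) :
    coeff α (rootComponent j β g) = rootCoord j (coeff (p ^ e • α + ofFinVec β) g) := rfl

theorem coe_rootComponent (j : FrobBasisIndex K p e) (β : σ → Fin (p ^ e))
    (g : MvPolynomial σ K) :
    (rootComponent j β g : MvPowerSeries σ K) = MvPowerSeries.rootComponent j β g := by
  ext α
  rw [coeff_coe, coeff_rootComponent, MvPowerSeries.coeff_rootComponent, coeff_coe]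

variable [DecidableEq σ]

theorem rootComponent_mul_pow (j : FrobBasisIndex K p e) (β : σ → Fin (p ^ e))
    (a b : MvPolynomial σ K) :
    rootComponent j β (a * b ^ p ^ e) = rootComponent j β a * b :=
  coe_injective _ _ <| by
    push_cast [coe_rootComponent]
    exact MvPowerSeries.rootComponent_mul_pow j β _ _

theorem mem_span_range_rootComponent_pow (g : MvPolynomial σ K) :
    g ∈ Ideal.span (Set.range fun i : FrobBasisIndex K p e × (σ → Fin (p ^ e)) =>
      rootComponent i.1 i.2 g ^ p ^ e) := by
  classical
  let J := g.support.biUnion fun m => ((frobBasis K p e).repr (g.coeff m)).support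
  have hJ (m : σ →₀ ℕ) :
      ((frobBasis K p e).repr (MvPowerSeries.coeff m (g : MvPowerSeries σ K))).support ⊆ J := by
    rw [coeff_coe]
    by_cases hm : m ∈ g.support
    · exact fun j hj => Finset.mem_biUnion.2 ⟨m, hm, hj⟩
    · simp [notMem_support_iff.1 hm]
  have hg : ∑ β : σ → Fin (p ^ e), ∑ j ∈ J,
      monomial (ofFinVec β) (frobBasis K p e j : K) * rootComponent j β g ^ p ^ e = g :=
    coe_injective _ _ <| by
      simp only [← coeToMvPowerSeries.ringHom_apply, map_sum, map_mul, map_pow]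
      simpa [coe_rootComponent] using MvPowerSeries.sum_monomial_mul_rootComponent_pow _ hJ
  refine hg.subst (motive := (· ∈ Ideal.span _))
    (Ideal.sum_mem _ fun β _ => Ideal.sum_mem _ fun j _ => ?_)
  exact Ideal.mul_mem_left _ _ (Ideal.subset_span ⟨(j, β), rfl⟩)

theorem tilde_map_coeToMvPowerSeries (C : Ideal (MvPolynomial σ K)) :
    Ideal.tilde (p ^ e) (C.map coeToMvPowerSeries.ringHom) =
      (Ideal.tilde (p ^ e) C).map coeToMvPowerSeries.ringHom := by
  let c (i : FrobBasisIndex K p e × (σ → Fin (p ^ e))) := rootComponent (σ := σ) i.1 i.2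
  let d (i : FrobBasisIndex K p e × (σ → Fin (p ^ e))) :=
    MvPowerSeries.rootComponent (σ := σ) i.1 i.2
  have hspan : ∀ g, g ∈ Ideal.span (Set.range fun i => c i g ^ p ^ e) :=
    mem_span_range_rootComponent_pow
  rw [Ideal.tilde_eq_componentIdeal (c := c) (fun i => rootComponent_mul_pow i.1 i.2) hspan,
    Ideal.tilde_map_eq_map_componentIdeal _ (d := d)
      (fun i => MvPowerSeries.rootComponent_mul_pow i.1 i.2)
      (fun i g => coe_rootComponent i.1 i.2 g) hspan]

end MvPolynomial

theorem stmt15_general (K : Type u) [Field K] (p : ℕ) [Fact p.Prime] [CharP K p] (n : ℕ)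
    (A : Ideal (MvPolynomial (Fin n) K)) (u : MvPolynomial (Fin n) K)
    (e : ℕ) :
    Ideal.starClosure (MvPolynomial.coeToMvPowerSeries.ringHom u) (p ^ e)
        (Ideal.map (MvPolynomial.coeToMvPowerSeries.ringHom
          (R := K) (σ := Fin n)) A) =
      Ideal.map (MvPolynomial.coeToMvPowerSeries.ringHom (R := K) (σ := Fin n))
        (Ideal.starClosure u (p ^ e) A) :=
  Ideal.starClosure_map _ MvPolynomial.tilde_map_coeToMvPowerSeries u A

/-- Let `K` be a field of prime characteristic `p`,
`T = K[x_1,…,x_n]` and `R = K[[x_1,…,x_n]]`.  For every ideal `A` of `T`, `u ∈ T` and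
`e ≥ 1`, one has `(AR)^{⋆^e u} = (A^{⋆^e u})R`. -/
theorem stmt15 (K : Type u) [Field K] (p : ℕ) [Fact p.Prime] [CharP K p] (n : ℕ)
    (A : Ideal (MvPolynomial (Fin n) K)) (u : MvPolynomial (Fin n) K)
    (e : ℕ) (he : 1 ≤ e) :
    Ideal.starClosure (MvPolynomial.coeToMvPowerSeries.ringHom u) (p ^ e)
        (Ideal.map (MvPolynomial.coeToMvPowerSeries.ringHom
          (R := K) (σ := Fin n)) A) =
      Ideal.map (MvPolynomial.coeToMvPowerSeries.ringHom (R := K) (σ := Fin n))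
        (Ideal.starClosure u (p ^ e) A) :=
  stmt15_general K p n A u e
end
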